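/- arXiv:2110.12616 — 2 statements merged into one kernel-verified Lean document; each statement's English description precedes it below -/
import Mathlib

section
/- The spectral norm of the adjacency matrix of the sensitivity graph of the threshold function T_k on n bits (1 ≤ k ≤ n) is at least sqrt(k · (n+1-k)). -/
open Finset

/-- Hamming weight of a Boolean string. -/
def wt {n : ℕ} (x : Fin n → Bool) : ℕ := (univ.filter (fun i => x i = true)).card

/-- The threshold function with threshold `k` on `n` bits. -/
def Tk (n k : ℕ) (x : Fin n → Bool) : Bool := decide (k ≤ wt x)

/-- Flip the `i`-th bit of `x`. -/
def flipBit {n : ℕ} (x : Fin n → Bool) (i : Fin n) : Fin n → Bool := Function.update x i (!x i)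

/-- Sensitivity of `f` at input `x`. -/
def sens {n : ℕ} (f : (Fin n → Bool) → Bool) (x : Fin n → Bool) : ℕ :=
  (univ.filter (fun i => f (flipBit x i) ≠ f x)).card

/-- Adjacency matrix of the sensitivity graph of `f`. -/
def adjMat {n : ℕ} (f : (Fin n → Bool) → Bool) : Matrix (Fin n → Bool) (Fin n → Bool) ℝ :=
  fun x y => if hammingDist x y = 1 ∧ f x ≠ f y then 1 else 0

/-- Euclidean norm of a real vector indexed by a finite type. -/
noncomputable def enorm {ι : Type*} [Fintype ι] (v : ι → ℝ) : ℝ :=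
  Real.sqrt (∑ i, v i ^ 2)

/-- Spectral norm of a real matrix, as the maximal stretch of a nonzero vector. -/
noncomputable def specNorm {ι : Type*} [Fintype ι] [DecidableEq ι] (A : Matrix ι ι ℝ) : ℝ :=
  sSup {r : ℝ | ∃ v : ι → ℝ, v ≠ 0 ∧ r = _root_.enorm (A.mulVec v) / _root_.enorm v}

/-! The test vector is the indicator `v` of the slice of weight `k - 1`. A string of weight `k`
has exactly `k` neighbours of weight `k - 1` (flip one of its `k` ones), all on the other side
of the threshold; a string of weight `k - 2` also has neighbours of weight `k - 1`, but on the
same side. Hence `A v = k • 1_{wt = k}`, and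
`‖A v‖² / ‖v‖² = k² C(n, k) / C(n, k - 1) = k (n + 1 - k)`. -/

open scoped Matrix

section BooleanCube

variable {n : ℕ}

@[simp] lemma flipBit_self (x : Fin n → Bool) (i : Fin n) : flipBit x i i = !x i := by
  simp [flipBit]

lemma flipBit_of_ne (x : Fin n → Bool) {i j : Fin n} (h : j ≠ i) : flipBit x i j = x j :=
  Function.update_of_ne h _ _

@[simp] lemma flipBit_flipBit (x : Fin n → Bool) (i : Fin n) : flipBit (flipBit x i) i = x := by
  simp [flipBit]

lemma flipBit_injective (x : Fin n → Bool) : Function.Injective (flipBit x) := by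
  intro i j hij
  by_contra hne
  simpa [flipBit_of_ne x hne] using congrFun hij i

lemma hammingDist_eq_one_iff {x y : Fin n → Bool} :
    hammingDist x y = 1 ↔ ∃ i, flipBit x i = y := by
  constructor
  · rw [hammingDist, card_eq_one]
    rintro ⟨i, hi⟩
    refine ⟨i, funext fun j => ?_⟩
    have hj := Finset.ext_iff.mp hi j
    simp only [mem_filter, mem_univ, true_and, mem_singleton] at hj
    by_cases hji : j = i
    · subst hji
      cases hx : x j <;> cases hy : y j <;> simp_all
    · rw [flipBit_of_ne x hji]
      simpa [hji] using hj
  · rintro ⟨i, rfl⟩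
    rw [hammingDist, card_eq_one]
    refine ⟨i, Finset.ext fun j => ?_⟩
    by_cases hji : j = i
    · simp [hji]
    · simp [hji, flipBit_of_ne x hji]

lemma wt_flipBit_add_one {x : Fin n → Bool} {i : Fin n} (h : x i = true) :
    wt (flipBit x i) + 1 = wt x := by
  have hsupp : univ.filter (fun j => flipBit x i j = true) =
      (univ.filter (fun j => x j = true)).erase i := by
    ext j
    by_cases hji : j = i
    · simp [hji, h]
    · simp [hji, flipBit_of_ne x hji]
  rw [wt, wt, hsupp, card_erase_add_one (by simp [h])]

lemma wt_flipBit_of_false {x : Fin n → Bool} {i : Fin n} (h : x i = false) :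
    wt (flipBit x i) = wt x + 1 := by
  simpa using (wt_flipBit_add_one (x := flipBit x i) (i := i) (by simp [h])).symm

lemma card_filter_wt_eq (m : ℕ) : #{x : Fin n → Bool | wt x = m} = n.choose m := by
  refine (card_nbij' (t := powersetCard m (univ : Finset (Fin n)))
    (fun x => univ.filter (fun i => x i = true)) (fun s i => decide (i ∈ s)) ?_ ?_ ?_ ?_).trans
    (by simp)
  · intro x hx
    simpa [wt] using (mem_filter.mp hx).2
  · intro s hs
    exact mem_filter.mpr ⟨mem_univ _, by simpa [wt] using (mem_powersetCard.mp hs).2⟩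
  · intro x _
    funext i
    simp
  · intro s _
    ext i
    simp

end BooleanCube

lemma adjMat_mulVec_apply {n : ℕ} (f : (Fin n → Bool) → Bool) (v : (Fin n → Bool) → ℝ)
    (x : Fin n → Bool) :
    (adjMat f *ᵥ v) x = ∑ i, if f x ≠ f (flipBit x i) then v (flipBit x i) else 0 := by
  calc (adjMat f *ᵥ v) x
      = ∑ y ∈ univ.filter (fun y => hammingDist x y = 1), if f x ≠ f y then v y else 0 := by
        rw [sum_filter]
        refine sum_congr rfl fun y _ => ?_
        simp only [adjMat, ite_and, ite_mul, one_mul, zero_mul]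
    _ = ∑ y ∈ univ.image (flipBit x), if f x ≠ f y then v y else 0 := by
        congr 1
        ext y
        simp [hammingDist_eq_one_iff]
    _ = _ := sum_image (flipBit_injective x).injOn

def sliceIndicator (n m : ℕ) : (Fin n → Bool) → ℝ := fun x => if wt x = m then 1 else 0

lemma sum_sq_sliceIndicator (n m : ℕ) : ∑ x, sliceIndicator n m x ^ 2 = n.choose m := by
  simp [sliceIndicator, ite_pow, sum_boole, card_filter_wt_eq]

lemma adjMat_Tk_mulVec_sliceIndicator (n j : ℕ) :
    adjMat (Tk n (j + 1)) *ᵥ sliceIndicator n j =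
      ((j + 1 : ℕ) : ℝ) • sliceIndicator n (j + 1) := by
  funext x
  have hterm : ∀ i, (if Tk n (j + 1) x ≠ Tk n (j + 1) (flipBit x i)
      then sliceIndicator n j (flipBit x i) else 0) =
      if wt x = j + 1 ∧ x i = true then 1 else 0 := by
    intro i
    cases hxi : x i
    · have := wt_flipBit_of_false hxi
      simp only [Tk, sliceIndicator, ne_eq, decide_eq_decide, this]
      split_ifs <;> simp_all
      omega
    · have := wt_flipBit_add_one hxi
      simp only [Tk, sliceIndicator, ne_eq, decide_eq_decide]
      split_ifs <;> simp_all
  rw [adjMat_mulVec_apply, sum_congr rfl fun i _ => hterm i, sum_boole]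
  by_cases hx : wt x = j + 1
  · simp [sliceIndicator, ← hx, wt]
  · simp [sliceIndicator, hx]

section EuclideanNorm

variable {ι : Type*} [Fintype ι]

lemma enorm_const_smul (c : ℝ) (v : ι → ℝ) :
    _root_.enorm (c • v) = |c| * _root_.enorm v := by
  simp only [_root_.enorm, Pi.smul_apply, smul_eq_mul, mul_pow, ← mul_sum]
  rw [Real.sqrt_mul (sq_nonneg c), Real.sqrt_sq_eq_abs]

lemma enorm_mulVec_le (A : Matrix ι ι ℝ) (v : ι → ℝ) :
    _root_.enorm (A *ᵥ v) ≤ √(∑ x, ∑ y, A x y ^ 2) * _root_.enorm v := by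
  rw [_root_.enorm, _root_.enorm, ← Real.sqrt_mul (by positivity), sum_mul]
  exact Real.sqrt_le_sqrt <| sum_le_sum fun x _ => sum_mul_sq_le_sq_mul_sq univ (A x) v

lemma div_enorm_le_specNorm [DecidableEq ι] (A : Matrix ι ι ℝ) {v : ι → ℝ}
    (hv : v ≠ 0) :
    _root_.enorm (A *ᵥ v) / _root_.enorm v ≤ specNorm A := by
  refine le_csSup ⟨√(∑ x, ∑ y, A x y ^ 2), ?_⟩ ⟨v, hv, rfl⟩
  rintro r ⟨w, hw, rfl⟩
  exact div_le_of_le_mul₀ (Real.sqrt_nonneg _) (by positivity) (enorm_mulVec_le A w)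

end EuclideanNorm

theorem specNorm_threshold_lower (n k : ℕ) (hk1 : 1 ≤ k) (hkn : k ≤ n) :
    Real.sqrt ((k : ℝ) * ((n : ℝ) + 1 - k)) ≤ specNorm (adjMat (Tk n k)) := by
  obtain ⟨j, rfl⟩ := Nat.exists_eq_add_of_le' hk1
  have hchoose : 0 < n.choose j := Nat.choose_pos (by omega)
  have hv : sliceIndicator n j ≠ 0 := by
    intro h
    have := sum_sq_sliceIndicator n j
    simp only [h, Pi.zero_apply, sq, mul_zero, sum_const_zero] at this
    exact hchoose.ne (by exact_mod_cast this)
  have hpascal : (n.choose (j + 1) : ℝ) * (j + 1) = n.choose j * (n - j) := by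
    rw [← Nat.cast_sub (by omega : j ≤ n)]
    exact_mod_cast Nat.choose_succ_right_eq n j
  have hgap : (n : ℝ) + 1 - (j + 1 : ℕ) = n - j := by push_cast; ring
  have hjn : (j : ℝ) ≤ n := by exact_mod_cast (by omega : j ≤ n)
  rw [hgap]
  calc √(((j + 1 : ℕ) : ℝ) * (n - j))
      = _root_.enorm (adjMat (Tk n (j + 1)) *ᵥ sliceIndicator n j) /
          _root_.enorm (sliceIndicator n j) := by
        rw [adjMat_Tk_mulVec_sliceIndicator, enorm_const_smul, _root_.enorm, _root_.enorm,
          sum_sq_sliceIndicator, sum_sq_sliceIndicator, eq_div_iff (by positivity), Nat.abs_cast,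
          ← Real.sqrt_mul (by positivity)]
        conv_rhs => rw [← Real.sqrt_sq (Nat.cast_nonneg (j + 1)), ← Real.sqrt_mul (sq_nonneg _)]
        congr 1
        push_cast
        linear_combination (-(j + 1 : ℝ)) * hpascal
    _ ≤ specNorm _ := div_enorm_le_specNorm _ hv
end

section
/- Let f : {0,1}^n → {0,1} be symmetric and non-constant, n ≥ 2, with t = t_f the minimum value such that f is constant on Hamming weights in [t, n-t]. Define w(x,i) = sqrt(n/t) if (|x| < t and x_i = 1) or (|x| > n - t and x_i = 0), w(x,i) = sqrt(t/n) if (|x| < t and x_i = 0) or (|x| > n - t and x_i = 1); for t ≤ |x| ≤ n - t, set w(x,i) = sqrt(n/t) on some fixed t indices with x_i = 1 and some fixed t indices with x_i = 0, and w(x,i) = 0 elsewhere. Then for all x, y with f(x) ≠ f(y), the sum over i with x_i ≠ y_i of sqrt(w(x,i) · w(y,i)) is at least 1. -/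
open Finset

/-!
Put `q = √(n/t)` and `r = √(t/n)`, so that `q * r = 1`. Two inputs with `f x ≠ f y` cannot both
have weight in the middle band `[t, n - t]`. If both lie on the same side of the band, every
coordinate where they differ carries the weights `q` and `r`. If exactly one of them, say `y`, lies
in the band, the `t` coordinates marked on `y` on the side facing `x` cannot all agree with `x`,
since `x` has fewer than `t` ones (resp. zeros); such a coordinate again carries `q` and `r`.
Finally, if `|x| < t ≤ n - t < |y|`, at least `n - 2t + 2` coordinates have `xᵢ = 0`, `yᵢ = 1`,
each contributing `r`, and `(n - 2t + 2)² t ≥ n`.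
-/

structure IsWeightScheme (n t : ℕ) (w : (Fin n → Bool) → Fin n → ℝ) : Prop where
  left : ∀ x, wt x < t → ∀ i, w x i = if x i then √((n : ℝ) / t) else √((t : ℝ) / n)
  right : ∀ x, n - t < wt x → ∀ i, w x i = if x i then √((t : ℝ) / n) else √((n : ℝ) / t)
  mid : ∀ x, t ≤ wt x → wt x ≤ n - t →
    ∃ S1 S0 : Finset (Fin n), S1.card = t ∧ S0.card = t ∧
      (∀ i ∈ S1, x i = true) ∧ (∀ i ∈ S0, x i = false) ∧
      (∀ i, w x i = if i ∈ S1 ∪ S0 then √((n : ℝ) / t) else 0)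

noncomputable def pairSum {n : ℕ} (w : (Fin n → Bool) → Fin n → ℝ) (x y : Fin n → Bool) : ℝ :=
  ∑ i ∈ univ.filter (fun i => x i ≠ y i), √(w x i * w y i)

section Counting

variable {n : ℕ}

lemma wt_le (x : Fin n → Bool) : wt x ≤ n :=
  (card_filter_le _ _).trans_eq (card_fin n)

lemma card_filter_eq_false_add_wt (x : Fin n → Bool) : #{i | x i = false} + wt x = n := by
  simpa [add_comm, wt] using card_filter_add_card_filter_not (s := univ) (fun i => x i = true)

lemma wt_le_wt_add_card (x y : Fin n → Bool) :
    wt y ≤ wt x + #{i | x i = false ∧ y i = true} := by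
  refine (card_le_card fun i hi => ?_).trans (card_union_le _ _)
  cases hxi : x i <;> simp_all

end Counting

lemma sqrt_div_mul_sqrt_div {a b : ℝ} (ha : 0 < a) (hb : 0 < b) : √(a / b) * √(b / a) = 1 := by
  rw [← Real.sqrt_mul (div_pos ha hb).le, div_mul_div_comm, mul_comm a, div_self (by positivity),
    Real.sqrt_one]

lemma one_le_mul_sqrt_div {n t b : ℕ} (ht : 0 < t) (htn : 2 * t ≤ n) (hb : n + 2 ≤ 2 * t + b) :
    1 ≤ (b : ℝ) * √((t : ℝ) / n) := by
  have hn : (0 : ℝ) < n := by exact_mod_cast (by omega : 0 < n)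
  have hb2 : 2 ≤ b := by omega
  have hnat : n ≤ b ^ 2 * t := by
    nlinarith [Nat.mul_le_mul_right t hb2, Nat.mul_le_mul_left b ht, Nat.mul_le_mul_left (b * t) hb2]
  have hreal : 1 ≤ (b : ℝ) ^ 2 * (t / n) := by
    rw [← mul_div_assoc, one_le_div hn]
    exact_mod_cast hnat
  calc (1 : ℝ) = √1 := Real.sqrt_one.symm
    _ ≤ √((b : ℝ) ^ 2 * (t / n)) := Real.sqrt_le_sqrt hreal
    _ = b * √((t : ℝ) / n) := by rw [Real.sqrt_mul (by positivity), Real.sqrt_sq (by positivity)]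

section PairSum

variable {n : ℕ} {w : (Fin n → Bool) → Fin n → ℝ} {x y : Fin n → Bool}

lemma pairSum_comm (w : (Fin n → Bool) → Fin n → ℝ) (x y : Fin n → Bool) :
    pairSum w x y = pairSum w y x := by
  simp only [pairSum, ne_comm, mul_comm]

lemma card_nsmul_le_pairSum {B : Finset (Fin n)} {c : ℝ}
    (hB : ∀ i ∈ B, x i ≠ y i ∧ c ≤ √(w x i * w y i)) : #B • c ≤ pairSum w x y :=
  (card_nsmul_le_sum B _ c fun i hi => (hB i hi).2).trans <|
    sum_le_sum_of_subset_of_nonneg (fun i hi => by simpa using (hB i hi).1)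
      fun _ _ _ => Real.sqrt_nonneg _

lemma one_le_pairSum_of_mul_eq_one {i : Fin n} (hi : x i ≠ y i) (h : w x i * w y i = 1) :
    1 ≤ pairSum w x y := by
  simpa [h] using card_nsmul_le_pairSum (B := {i}) (c := √(w x i * w y i)) (by simpa using hi)

lemma one_le_pairSum_of_eq_ite {a b : ℝ} (hab : a * b = 1)
    (hx : ∀ i, w x i = if x i then a else b) (hy : ∀ i, w y i = if y i then a else b)
    (hxy : x ≠ y) : 1 ≤ pairSum w x y := by
  obtain ⟨i, hi⟩ := Function.ne_iff.mp hxy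
  refine one_le_pairSum_of_mul_eq_one hi ?_
  rw [hx, hy]
  cases hxi : x i <;> cases hyi : y i <;> simp_all [mul_comm]

lemma one_le_pairSum_of_card_lt {a b : ℝ} (c : Bool) {S : Finset (Fin n)}
    (hS : ∀ i ∈ S, y i = c ∧ w y i = a) (hx : ∀ i, x i ≠ c → w x i = b) (hab : b * a = 1)
    (hcard : #{i | x i = c} < #S) : 1 ≤ pairSum w x y := by
  obtain ⟨i, hiS, hi⟩ := exists_mem_notMem_of_card_lt_card hcard
  have hxi : x i ≠ c := by simpa using hi
  obtain ⟨hyi, hwy⟩ := hS i hiS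
  exact one_le_pairSum_of_mul_eq_one (hyi ▸ hxi) (by rw [hx i hxi, hwy, hab])

variable {t : ℕ}

lemma one_le_pairSum_of_lt_of_lt (hw : IsWeightScheme n t w) (ht : 0 < t) (htn : 2 * t ≤ n)
    (hx : wt x < t) (hy : n - t < wt y) : 1 ≤ pairSum w x y := by
  have hr : ∀ i ∈ ({i | x i = false ∧ y i = true} : Finset (Fin n)),
      x i ≠ y i ∧ √((t : ℝ) / n) ≤ √(w x i * w y i) := by
    intro i hi
    simp only [mem_filter, mem_univ, true_and] at hi
    refine ⟨by simp [hi.1, hi.2], ?_⟩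
    rw [hw.left x hx, hw.right y hy, hi.1, hi.2, if_neg Bool.false_ne_true, if_pos rfl,
      Real.sqrt_mul_self (Real.sqrt_nonneg _)]
  refine (one_le_mul_sqrt_div ht htn ?_).trans ((nsmul_eq_mul _ _).symm.trans_le
    (card_nsmul_le_pairSum hr))
  have := wt_le_wt_add_card x y
  omega

lemma one_le_pairSum (hw : IsWeightScheme n t w) (ht : 0 < t) (htn : 2 * t ≤ n) (hxy : x ≠ y)
    (hle : wt x ≤ wt y) (hnotmid : ¬(t ≤ wt x ∧ wt y ≤ n - t)) : 1 ≤ pairSum w x y := by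
  have hqr := sqrt_div_mul_sqrt_div (a := n) (b := t) (by exact_mod_cast (by omega : 0 < n))
    (by exact_mod_cast ht)
  have hrq : √((t : ℝ) / n) * √((n : ℝ) / t) = 1 := by rwa [mul_comm]
  by_cases hy : wt y < t
  · exact one_le_pairSum_of_eq_ite hqr (hw.left x (hle.trans_lt hy)) (hw.left y hy) hxy
  by_cases hx : n - t < wt x
  · exact one_le_pairSum_of_eq_ite hrq (hw.right x hx) (hw.right y (hx.trans_le hle)) hxy
  by_cases hx' : wt x < t
  · by_cases hy' : n - t < wt y
    · exact one_le_pairSum_of_lt_of_lt hw ht htn hx' hy'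
    obtain ⟨S1, _, hS1, -, hS1y, -, hwy⟩ := hw.mid y (not_lt.mp hy) (not_lt.mp hy')
    refine one_le_pairSum_of_card_lt true (S := S1) (fun i hi => ⟨hS1y i hi, ?_⟩)
      (fun i hi => by simpa [hi] using hw.left x hx' i) hrq (hS1 ▸ hx')
    simp [hwy, hi]
  · obtain ⟨_, S0, -, hS0, -, hS0x, hwx⟩ := hw.mid x (not_lt.mp hx') (not_lt.mp hx)
    have hy' : n - t < wt y := by omega
    rw [pairSum_comm]
    refine one_le_pairSum_of_card_lt false (S := S0) (fun i hi => ⟨hS0x i hi, ?_⟩)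
      (fun i hi => by simpa [hi] using hw.right y hy' i) hrq ?_
    · simp [hwx, hi]
    · have := card_filter_eq_false_add_wt y
      omega

end PairSum

theorem weight_scheme_feasible_general (n t : ℕ) (htn : 2 * t ≤ n)
    (g : ℕ → Bool) (f : (Fin n → Bool) → Bool) (hf : ∀ x, f x = g (wt x))
    (ht : IsLeast {s : ℕ | ∀ a b : ℕ, s ≤ a → a ≤ n - s → s ≤ b → b ≤ n - s → g a = g b} t)
    (w : (Fin n → Bool) → Fin n → ℝ)
    (hleft : ∀ x, wt x < t → ∀ i, w x i =
      if x i then Real.sqrt ((n : ℝ) / t) else Real.sqrt ((t : ℝ) / n))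
    (hright : ∀ x, n - t < wt x → ∀ i, w x i =
      if x i then Real.sqrt ((t : ℝ) / n) else Real.sqrt ((n : ℝ) / t))
    (hmid : ∀ x, t ≤ wt x → wt x ≤ n - t →
      ∃ S1 S0 : Finset (Fin n), S1.card = t ∧ S0.card = t ∧
        (∀ i ∈ S1, x i = true) ∧ (∀ i ∈ S0, x i = false) ∧
        (∀ i, w x i = if i ∈ S1 ∪ S0 then Real.sqrt ((n : ℝ) / t) else 0)) :
    ∀ x y : Fin n → Bool, f x ≠ f y →
      1 ≤ ∑ i ∈ univ.filter (fun i => x i ≠ y i), Real.sqrt (w x i * w y i) := by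
  intro x y hxy
  have ht0 : 0 < t := by
    refine Nat.pos_of_ne_zero fun h0 => hxy ?_
    subst h0
    rw [hf, hf]
    exact ht.1 _ _ (Nat.zero_le _) (wt_le x) (Nat.zero_le _) (wt_le y)
  wlog hle : wt x ≤ wt y generalizing x y
  · rw [← pairSum, pairSum_comm]
    exact this y x hxy.symm (le_of_not_ge hle)
  refine one_le_pairSum ⟨hleft, hright, hmid⟩ ht0 htn (fun h => hxy (h ▸ rfl)) hle ?_
  rintro ⟨hx, hy⟩
  exact hxy (by rw [hf, hf]; exact ht.1 _ _ hx (hle.trans hy) (hx.trans hle) hy)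

theorem weight_scheme_feasible (n t : ℕ) (hn : 2 ≤ n) (htn : 2 * t ≤ n)
    (g : ℕ → Bool) (f : (Fin n → Bool) → Bool) (hf : ∀ x, f x = g (wt x))
    (hnc : ∃ x y : Fin n → Bool, f x ≠ f y)
    (ht : IsLeast {s : ℕ | ∀ a b : ℕ, s ≤ a → a ≤ n - s → s ≤ b → b ≤ n - s → g a = g b} t)
    (w : (Fin n → Bool) → Fin n → ℝ)
    (hleft : ∀ x, wt x < t → ∀ i, w x i =
      if x i then Real.sqrt ((n : ℝ) / t) else Real.sqrt ((t : ℝ) / n))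
    (hright : ∀ x, n - t < wt x → ∀ i, w x i =
      if x i then Real.sqrt ((t : ℝ) / n) else Real.sqrt ((n : ℝ) / t))
    (hmid : ∀ x, t ≤ wt x → wt x ≤ n - t →
      ∃ S1 S0 : Finset (Fin n), S1.card = t ∧ S0.card = t ∧
        (∀ i ∈ S1, x i = true) ∧ (∀ i ∈ S0, x i = false) ∧
        (∀ i, w x i = if i ∈ S1 ∪ S0 then Real.sqrt ((n : ℝ) / t) else 0)) :
    ∀ x y : Fin n → Bool, f x ≠ f y →
      1 ≤ ∑ i ∈ univ.filter (fun i => x i ≠ y i), Real.sqrt (w x i * w y i) :=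
  weight_scheme_feasible_general n t htn g f hf ht w hleft hright hmid
end
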